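/- arXiv:2604.11199 — 7 statements merged into one kernel-verified Lean document; each statement's English description precedes it below -/
import Mathlib

section
/- For 0 < a < 1 and 0 < p < 1, define κ(a) = sin(πa)/(πa(1-a)) and α_a(p) = p + κ(a)(1-a-p)·max(p,1-p). Then 0 < α_a(p) < 1. -/
open Real

theorem alpha_mem_unit_interval (a p : ℝ) (ha : 0 < a) (ha1 : a < 1)
    (hp : 0 < p) (hp1 : p < 1) :
    0 < p + (Real.sin (π * a) / (π * a * (1 - a))) * (1 - a - p) * max p (1 - p) ∧
    p + (Real.sin (π * a) / (π * a * (1 - a))) * (1 - a - p) * max p (1 - p) < 1 := by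
  have hπ := Real.pi_pos
  have ha1' : 0 < 1 - a := by linarith
  have hD : 0 < π * a * (1 - a) := mul_pos (mul_pos hπ ha) ha1'
  have hS0 : 0 < Real.sin (π * a) :=
    Real.sin_pos_of_pos_of_lt_pi (by positivity) (by nlinarith)
  have hS1 : Real.sin (π * a) < π * a := Real.sin_lt (by positivity)
  have hS2 : Real.sin (π * a) < π * (1 - a) := by
    have h := Real.sin_lt (x := π * (1 - a)) (by positivity)
    rw [show π * (1 - a) = π - π * a by ring, Real.sin_pi_sub] at h
    nlinarith
  set k := Real.sin (π * a) / (π * a * (1 - a)) with hk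
  have hk0 : 0 < k := div_pos hS0 hD
  have hkD : k * (π * a * (1 - a)) = Real.sin (π * a) :=
    div_mul_cancel₀ _ (ne_of_gt hD)
  have hka : k * a < 1 := by
    have h1 : 0 < π * (1 - a) := mul_pos hπ ha1'
    nlinarith [mul_pos hπ ha1']
  have hk1a : k * (1 - a) < 1 := by
    have h1 : 0 < π * a := mul_pos hπ ha
    nlinarith
  rcases max_cases p (1 - p) with ⟨hm, hpl⟩ | ⟨hm, hpl⟩ <;> rw [hm] <;> constructor
  · -- m = p, lower bound
    nlinarith [mul_pos hk0 hp, mul_pos hp (sub_pos.mpr hka),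
      mul_pos hk0 (mul_pos hp hp)]
  · -- m = p, upper bound
    have hx : 0 < (1 - a) * (1 - p) - (1 - a - p) * p := by nlinarith
    nlinarith [mul_pos hk0 hx, mul_pos (sub_pos.mpr hp1) (sub_pos.mpr hk1a)]
  · -- m = 1 - p, lower bound
    have hx : 0 < a * p - (a + p - 1) * (1 - p) := by nlinarith
    nlinarith [mul_pos hk0 hx, mul_pos hp (sub_pos.mpr hka)]
  · -- m = 1 - p, upper bound
    nlinarith [mul_pos hk0 (sub_pos.mpr hp1),
      mul_pos (sub_pos.mpr hp1) (sub_pos.mpr hk1a),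
      mul_pos hk0 (mul_pos hp (sub_pos.mpr hp1))]
end

section
/- Let 0 < a < 1 and let U₁, U₂ be independent uniform random variables on (0,1). Set X = U₁^{1/a}, Y = U₂^{1/(1-a)}, P = X/(X+Y). Then P has probability density f_P(p) = a(1-a)·p^{a-1}(1-p)^{-a}/max(p,1-p) on (0,1). -/
/-! For `x ∈ (0, 1)` put `k = (1 - x) / x`. Since `X / (X + Y) ≤ x ↔ k X ≤ Y`, Fubini gives
`P(P ≤ x) = ∫₀¹ (1 - k^(1-a) u^((1-a)/a))⁺ du`. For `x ≥ 1/2` we have `k ≤ 1`, the integrand stays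
nonnegative and the integral is `1 - a k^(1-a)`; for `x ≤ 1/2` it vanishes beyond `u = k^(-a)` and
the integral is `(1 - a) k^(-a)`. These two expressions are antiderivatives of the claimed density
on `(0, 1/2]` and `[1/2, 1)` respectively (the `max` in the density switches exactly at `1/2`),
so both measures give the same mass to every `Iic x`. -/

open Real MeasureTheory Set

theorem lintegral_Ioc_ofReal_eq_sub_of_hasDerivAt {g g' : ℝ → ℝ} {l r : ℝ} (hlr : l ≤ r)
    (hcont : ContinuousOn g (Icc l r)) (hderiv : ∀ x ∈ Ioo l r, HasDerivAt g (g' x) x)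
    (hnonneg : ∀ x ∈ Ioo l r, 0 ≤ g' x) :
    ∫⁻ x in Ioc l r, ENNReal.ofReal (g' x) = ENNReal.ofReal (g r - g l) := by
  have hint := intervalIntegral.integrableOn_deriv_of_nonneg hcont hderiv hnonneg
  have hae : 0 ≤ᵐ[volume.restrict (Ioc l r)] g' := by
    rw [← restrict_Ioo_eq_restrict_Ioc]
    exact ae_restrict_of_forall_mem measurableSet_Ioo hnonneg
  rw [← ofReal_integral_eq_lintegral_ofReal hint hae, ← intervalIntegral.integral_of_le hlr,
    intervalIntegral.integral_eq_sub_of_hasDerivAt_of_le hlr hcont hderiv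
      ((intervalIntegrable_iff_integrableOn_Ioc_of_le hlr).2 hint)]

theorem MeasureTheory.Measure.ext_of_Iic_of_ae_mem_Ioo {ν ρ : Measure ℝ} [IsFiniteMeasure ν]
    {l r : ℝ} (hν : ∀ᵐ x ∂ν, x ∈ Ioo l r) (hρ : ∀ᵐ x ∂ρ, x ∈ Ioo l r) (huniv : ν univ = ρ univ)
    (hIic : ∀ x ∈ Ioo l r, ν (Iic x) = ρ (Iic x)) : ν = ρ := by
  rw [ae_iff] at hν hρ
  refine Measure.ext_of_Iic ν ρ fun x => ?_
  rcases le_or_gt x l with hxl | hlx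
  · have hsub : Iic x ⊆ (Ioo l r)ᶜ := fun y hyx hy => (hy.1.trans_le hyx).not_ge hxl
    rw [measure_mono_null hsub hν, measure_mono_null hsub hρ]
  rcases lt_or_ge x r with hxr | hrx
  · exact hIic x ⟨hlx, hxr⟩
  · have hsub : (Iic x)ᶜ ⊆ (Ioo l r)ᶜ := compl_subset_compl.2 fun y hy => hy.2.le.trans hrx
    rwa [measure_congr (ae_eq_univ.2 (measure_mono_null hsub hν)),
      measure_congr (ae_eq_univ.2 (measure_mono_null hsub hρ))]

theorem lintegral_Ioc_ofReal_one_sub_mul_rpow {e K m : ℝ} (he : 0 < e) (hK : 0 ≤ K) (hm : 0 ≤ m)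
    (hKm : K * m ^ e ≤ 1) :
    ∫⁻ u in Ioc 0 m, ENNReal.ofReal (1 - K * u ^ e)
      = ENNReal.ofReal (m - K * m ^ (e + 1) / (e + 1)) := by
  have he1 : 0 < e + 1 := by linarith
  have hderiv : ∀ u ∈ Ioo 0 m,
      HasDerivAt (fun u : ℝ => u - K * u ^ (e + 1) / (e + 1)) (1 - K * u ^ e) u := by
    intro u hu
    have h := ((hasDerivAt_id' u).sub (((hasDerivAt_rpow_const (p := e + 1)
      (Or.inl hu.1.ne')).const_mul K).div_const (e + 1)))
    refine h.congr_deriv ?_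
    rw [add_sub_cancel_right]
    field_simp
  have hnonneg : ∀ u ∈ Ioo 0 m, 0 ≤ 1 - K * u ^ e := fun u hu => by
    nlinarith [mul_le_mul_of_nonneg_left (rpow_le_rpow hu.1.le hu.2.le he.le) hK]
  have hcont : Continuous fun u : ℝ => u - K * u ^ (e + 1) / (e + 1) :=
    continuous_id.sub ((continuous_const.mul (continuous_rpow_const he1.le)).div_const _)
  rw [lintegral_Ioc_ofReal_eq_sub_of_hasDerivAt hm hcont.continuousOn hderiv hnonneg,
    zero_rpow he1.ne']
  simp

theorem lintegral_Ioc_ofReal_one_sub_mul_rpow_eq_zero {e K m r : ℝ} (he : 0 ≤ e) (hm : 0 ≤ m)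
    (hK : 0 ≤ K) (hKm : 1 ≤ K * m ^ e) :
    ∫⁻ u in Ioc m r, ENNReal.ofReal (1 - K * u ^ e) = 0 := by
  refine (setLIntegral_congr_fun measurableSet_Ioc fun u hu => ?_).trans lintegral_zero
  refine ENNReal.ofReal_eq_zero.2 ?_
  nlinarith [mul_le_mul_of_nonneg_left (rpow_le_rpow hm hu.1.le he) hK]

noncomputable def johnkDensity (a p : ℝ) : ℝ :=
  a * (1 - a) * p ^ (a - 1) * (1 - p) ^ (-a) / max p (1 - p)

noncomputable def johnkCDFLeft (a x : ℝ) : ℝ := (1 - a) * (x / (1 - x)) ^ a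

noncomputable def johnkCDFRight (a x : ℝ) : ℝ := 1 - a * ((1 - x) / x) ^ (1 - a)

theorem johnkDensity_nonneg {a p : ℝ} (ha : 0 ≤ a) (ha1 : a ≤ 1) (hp : p ∈ Ioo 0 1) :
    0 ≤ johnkDensity a p := by
  have := hp.1
  have := sub_pos.2 hp.2
  have := sub_nonneg.2 ha1
  unfold johnkDensity
  positivity

theorem hasDerivAt_johnkCDFLeft {a p : ℝ} (hp0 : 0 < p) (hp : p ≤ 1 / 2) :
    HasDerivAt (johnkCDFLeft a) (johnkDensity a p) p := by
  have h1p : 0 < 1 - p := by linarith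
  have hdiv : HasDerivAt (fun t : ℝ => t / (1 - t)) (1 / (1 - p) ^ 2) p := by
    refine ((hasDerivAt_id' p).div ((hasDerivAt_id' p).const_sub 1)
      h1p.ne').congr_deriv ?_
    field_simp
    ring
  refine ((hdiv.rpow_const (Or.inl (by positivity))).const_mul (1 - a)).congr_deriv ?_
  rw [johnkDensity, max_eq_right (by linarith), div_rpow hp0.le h1p.le,
    rpow_sub h1p, rpow_one, rpow_neg h1p.le]
  field_simp

theorem hasDerivAt_johnkCDFRight {a p : ℝ} (hp : 1 / 2 ≤ p) (hp1 : p < 1) :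
    HasDerivAt (johnkCDFRight a) (johnkDensity a p) p := by
  have hp0 : 0 < p := by linarith
  have h1p : 0 < 1 - p := by linarith
  have hdiv : HasDerivAt (fun t : ℝ => (1 - t) / t) (-1 / p ^ 2) p := by
    refine (((hasDerivAt_id' p).const_sub 1).div (hasDerivAt_id' p)
      hp0.ne').congr_deriv ?_
    field_simp
    ring
  refine (((hdiv.rpow_const (Or.inl (by positivity))).const_mul a).const_sub 1).congr_deriv ?_
  rw [johnkDensity, max_eq_left (by linarith), show 1 - a - 1 = -a by ring,
    div_rpow h1p.le hp0.le, rpow_sub_one hp0.ne', rpow_neg hp0.le]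
  field_simp

theorem continuousOn_johnkCDFLeft {a : ℝ} (ha : 0 ≤ a) :
    ContinuousOn (johnkCDFLeft a) (Icc 0 (1 / 2)) := by
  refine continuousOn_const.mul (ContinuousOn.rpow_const ?_ fun _ _ => Or.inr ha)
  exact continuousOn_id.div (continuousOn_const.sub continuousOn_id)
    fun x hx => by linarith [hx.2]

theorem continuousOn_johnkCDFRight {a : ℝ} (ha1 : a ≤ 1) :
    ContinuousOn (johnkCDFRight a) (Icc (1 / 2) 1) := by
  refine continuousOn_const.sub (continuousOn_const.mul
    (ContinuousOn.rpow_const ?_ fun _ _ => Or.inr (sub_nonneg.2 ha1)))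
  exact (continuousOn_const.sub continuousOn_id).div continuousOn_id
    fun x hx => by linarith [hx.1]

theorem lintegral_johnkDensity_Ioc_of_le_half {a x : ℝ} (ha : 0 < a) (ha1 : a < 1) (hx0 : 0 ≤ x)
    (hx : x ≤ 1 / 2) :
    ∫⁻ p in Ioc 0 x, ENNReal.ofReal (johnkDensity a p) = ENNReal.ofReal (johnkCDFLeft a x) := by
  rw [lintegral_Ioc_ofReal_eq_sub_of_hasDerivAt hx0
    ((continuousOn_johnkCDFLeft ha.le).mono (Icc_subset_Icc_right hx))
    (fun p hp => hasDerivAt_johnkCDFLeft hp.1 (hp.2.le.trans hx))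
    (fun p hp => johnkDensity_nonneg ha.le ha1.le ⟨hp.1, by linarith [hp.2]⟩)]
  simp [johnkCDFLeft, zero_rpow ha.ne']

theorem lintegral_johnkDensity_Ioc_of_half_le {a x : ℝ} (ha : 0 < a) (ha1 : a < 1)
    (hx : 1 / 2 ≤ x) (hx1 : x ≤ 1) :
    ∫⁻ p in Ioc 0 x, ENNReal.ofReal (johnkDensity a p) = ENNReal.ofReal (johnkCDFRight a x) := by
  have hleft : johnkCDFLeft a (1 / 2) = 1 - a := by norm_num [johnkCDFLeft]
  have hright : johnkCDFRight a (1 / 2) = 1 - a := by norm_num [johnkCDFRight]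
  have hmono : 1 - a ≤ johnkCDFRight a x := by
    have hk : ((1 - x) / x) ^ (1 - a) ≤ 1 :=
      rpow_le_one (div_nonneg (by linarith) (by linarith))
        ((div_le_one (by linarith)).2 (by linarith)) (by linarith)
    norm_num [johnkCDFRight]
    nlinarith
  rw [← Ioc_union_Ioc_eq_Ioc (by norm_num) hx,
    lintegral_union measurableSet_Ioc (Ioc_disjoint_Ioc_of_le le_rfl),
    lintegral_johnkDensity_Ioc_of_le_half ha ha1 (by norm_num) le_rfl,
    lintegral_Ioc_ofReal_eq_sub_of_hasDerivAt hx
      ((continuousOn_johnkCDFRight ha1.le).mono (Icc_subset_Icc_right hx1))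
      (fun p hp => hasDerivAt_johnkCDFRight hp.1.le (hp.2.trans_le hx1))
      (fun p hp => johnkDensity_nonneg ha.le ha1.le ⟨by linarith [hp.1], hp.2.trans_le hx1⟩),
    hleft, hright, ← ENNReal.ofReal_add (by linarith) (sub_nonneg.2 hmono), add_sub_cancel]

theorem lintegral_johnkDensity_Ioo {a : ℝ} (ha : 0 < a) (ha1 : a < 1) :
    ∫⁻ p in Ioo 0 1, ENNReal.ofReal (johnkDensity a p) = 1 := by
  rw [setLIntegral_congr Ioo_ae_eq_Ioc,
    lintegral_johnkDensity_Ioc_of_half_le ha ha1 (by norm_num) le_rfl]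
  simp [johnkCDFRight, zero_rpow (sub_pos.2 ha1).ne']

noncomputable def johnkRatio (a : ℝ) (u : ℝ × ℝ) : ℝ :=
  u.1 ^ (1 / a) / (u.1 ^ (1 / a) + u.2 ^ (1 / (1 - a)))

theorem div_add_le_iff_mul_le {X Y x : ℝ} (hXY : 0 < X + Y) (hx : 0 < x) :
    X / (X + Y) ≤ x ↔ X * ((1 - x) / x) ≤ Y := by
  rw [div_le_iff₀ hXY, ← mul_div_assoc, div_le_iff₀ hx]
  constructor <;> intro h <;> linarith

theorem div_add_mem_Ioo {X Y : ℝ} (hX : 0 < X) (hY : 0 < Y) : X / (X + Y) ∈ Ioo 0 1 :=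
  ⟨by positivity, (div_lt_one (by positivity)).2 (by linarith)⟩

theorem measurable_johnkRatio (a : ℝ) : Measurable (johnkRatio a) := by
  unfold johnkRatio
  fun_prop

theorem johnkRatio_le_iff {a x u v : ℝ} (ha1 : a < 1) (hx0 : 0 < x) (hx1 : x ≤ 1)
    (hu : 0 < u) (hv : 0 < v) :
    johnkRatio a (u, v) ≤ x ↔ ((1 - x) / x) ^ (1 - a) * u ^ ((1 - a) / a) ≤ v := by
  have hX := rpow_pos_of_pos hu (1 / a)
  have hY := rpow_pos_of_pos hv (1 / (1 - a))
  have hk : 0 ≤ (1 - x) / x := div_nonneg (sub_nonneg.2 hx1) hx0.le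
  rw [johnkRatio, div_add_le_iff_mul_le (by positivity) hx0, one_div (1 - a),
    le_rpow_inv_iff_of_pos (by positivity) hv.le (sub_pos.2 ha1), mul_rpow hX.le hk,
    ← rpow_mul hu.le, one_div_mul_eq_div, mul_comm]

theorem restrict_Ioo_johnkRatio_slice {a x u : ℝ} (ha1 : a < 1) (hx0 : 0 < x) (hx1 : x < 1)
    (hu : 0 < u) :
    volume.restrict (Ioo 0 1) (Prod.mk u ⁻¹' (johnkRatio a ⁻¹' Iic x))
      = ENNReal.ofReal (1 - ((1 - x) / x) ^ (1 - a) * u ^ ((1 - a) / a)) := by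
  rw [Measure.restrict_apply
    (measurable_prodMk_left (measurable_johnkRatio a measurableSet_Iic))]
  have hc : 0 < ((1 - x) / x) ^ (1 - a) * u ^ ((1 - a) / a) := by
    have := sub_pos.2 hx1
    positivity
  have hslice : Prod.mk u ⁻¹' (johnkRatio a ⁻¹' Iic x) ∩ Ioo 0 1
      = Ico (((1 - x) / x) ^ (1 - a) * u ^ ((1 - a) / a)) 1 := by
    ext v
    simp only [mem_inter_iff, mem_preimage, mem_Iic, mem_Ioo, mem_Ico]
    constructor
    · rintro ⟨hle, hv, hv1⟩
      exact ⟨(johnkRatio_le_iff ha1 hx0 hx1.le hu hv).1 hle, hv1⟩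
    · rintro ⟨hle, hv1⟩
      have hv := hc.trans_le hle
      exact ⟨(johnkRatio_le_iff ha1 hx0 hx1.le hu hv).2 hle, hv, hv1⟩
  rw [hslice, Real.volume_Ico]

theorem prod_johnkRatio_preimage_Iic {a x : ℝ} (ha1 : a < 1) (hx0 : 0 < x) (hx1 : x < 1) :
    (volume.restrict (Ioo (0 : ℝ) 1)).prod (volume.restrict (Ioo (0 : ℝ) 1))
        (johnkRatio a ⁻¹' Iic x)
      = ∫⁻ u in Ioc 0 1, ENNReal.ofReal (1 - ((1 - x) / x) ^ (1 - a) * u ^ ((1 - a) / a)) := by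
  rw [Measure.prod_apply (measurable_johnkRatio a measurableSet_Iic),
    ← restrict_Ioo_eq_restrict_Ioc]
  exact setLIntegral_congr_fun measurableSet_Ioo fun u hu =>
    restrict_Ioo_johnkRatio_slice ha1 hx0 hx1 hu.1

theorem prod_johnkRatio_preimage_Iic_of_le_half {a x : ℝ} (ha : 0 < a) (ha1 : a < 1)
    (hx0 : 0 < x) (hx : x ≤ 1 / 2) :
    (volume.restrict (Ioo (0 : ℝ) 1)).prod (volume.restrict (Ioo (0 : ℝ) 1))
        (johnkRatio a ⁻¹' Iic x) = ENNReal.ofReal (johnkCDFLeft a x) := by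
  set k := (1 - x) / x with hk_def
  have hk : 1 ≤ k := by rw [hk_def, le_div_iff₀ hx0]; linarith
  have hk0 : 0 < k := one_pos.trans_le hk
  have he : 0 < (1 - a) / a := div_pos (sub_pos.2 ha1) ha
  set m := k ^ (-a) with hm_def
  have hm0 : 0 < m := rpow_pos_of_pos hk0 _
  have hm1 : m ≤ 1 := rpow_le_one_of_one_le_of_nonpos hk (by linarith)
  have hKm : k ^ (1 - a) * m ^ ((1 - a) / a) = 1 := by
    rw [hm_def, ← rpow_mul hk0.le, ← rpow_add hk0, show 1 - a + -a * ((1 - a) / a) = 0 by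
      field_simp; ring, rpow_zero]
  rw [prod_johnkRatio_preimage_Iic ha1 hx0 (by linarith), ← Ioc_union_Ioc_eq_Ioc hm0.le hm1,
    lintegral_union measurableSet_Ioc (Ioc_disjoint_Ioc_of_le le_rfl),
    lintegral_Ioc_ofReal_one_sub_mul_rpow he (rpow_nonneg hk0.le _) hm0.le hKm.le,
    lintegral_Ioc_ofReal_one_sub_mul_rpow_eq_zero he.le hm0.le (rpow_nonneg hk0.le _) hKm.ge,
    add_zero, rpow_add_one hm0.ne', ← mul_assoc, hKm, johnkCDFLeft, hm_def, rpow_neg hk0.le,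
    ← inv_rpow hk0.le, hk_def, inv_div]
  congr 1
  field_simp
  ring

theorem prod_johnkRatio_preimage_Iic_of_half_le {a x : ℝ} (ha : 0 < a) (ha1 : a < 1)
    (hx : 1 / 2 ≤ x) (hx1 : x < 1) :
    (volume.restrict (Ioo (0 : ℝ) 1)).prod (volume.restrict (Ioo (0 : ℝ) 1))
        (johnkRatio a ⁻¹' Iic x) = ENNReal.ofReal (johnkCDFRight a x) := by
  have hx0 : 0 < x := by linarith
  have hk0 : 0 ≤ (1 - x) / x := div_nonneg (by linarith) hx0.le
  have hK1 : ((1 - x) / x) ^ (1 - a) ≤ 1 :=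
    rpow_le_one hk0 ((div_le_one hx0).2 (by linarith)) (by linarith)
  rw [prod_johnkRatio_preimage_Iic ha1 hx0 hx1,
    lintegral_Ioc_ofReal_one_sub_mul_rpow (div_pos (sub_pos.2 ha1) ha) (rpow_nonneg hk0 _)
      zero_le_one (by rwa [one_rpow, mul_one]), one_rpow, johnkCDFRight]
  congr 1
  field_simp
  ring

theorem johnk_ratio_density (a : ℝ) (ha : 0 < a) (ha1 : a < 1) :
    Measure.map
      (fun u : ℝ × ℝ => u.1 ^ (1 / a) / (u.1 ^ (1 / a) + u.2 ^ (1 / (1 - a))))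
      ((volume.restrict (Ioo (0 : ℝ) 1)).prod (volume.restrict (Ioo (0 : ℝ) 1)))
    = volume.withDensity (fun p =>
        Set.indicator (Ioo (0 : ℝ) 1)
          (fun p => ENNReal.ofReal
            (a * (1 - a) * p ^ (a - 1) * (1 - p) ^ (-a) / max p (1 - p))) p) := by
  change Measure.map (johnkRatio a) _
    = volume.withDensity ((Ioo 0 1).indicator fun p => ENNReal.ofReal (johnkDensity a p))
  rw [withDensity_indicator measurableSet_Ioo]
  have hmeas := measurable_johnkRatio a
  refine Measure.ext_of_Iic_of_ae_mem_Ioo (l := 0) (r := 1) ?_ ?_ ?_ fun x hx => ?_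
  · refine (ae_map_iff hmeas.aemeasurable measurableSet_Ioo).2 ?_
    rw [Measure.prod_restrict]
    filter_upwards [ae_restrict_mem (measurableSet_Ioo.prod measurableSet_Ioo)] with u hu
    exact div_add_mem_Ioo (rpow_pos_of_pos hu.1.1 _) (rpow_pos_of_pos hu.2.1 _)
  · exact (withDensity_absolutelyContinuous _ _).ae_le (ae_restrict_mem measurableSet_Ioo)
  · rw [Measure.map_apply hmeas .univ, preimage_univ, ← univ_prod_univ, Measure.prod_prod,
      withDensity_apply _ .univ, Measure.restrict_univ, lintegral_johnkDensity_Ioo ha ha1]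
    simp
  have hIic : Iic x ∩ Ioo 0 1 = Ioc 0 x :=
    Set.ext fun p => ⟨fun h => ⟨h.2.1, h.1⟩, fun h => ⟨h.2, h.1, h.2.trans_lt hx.2⟩⟩
  rw [Measure.map_apply hmeas measurableSet_Iic, withDensity_apply _ measurableSet_Iic,
    Measure.restrict_restrict measurableSet_Iic, hIic]
  rcases le_or_gt x (1 / 2) with hxh | hxh
  · rw [prod_johnkRatio_preimage_Iic_of_le_half ha ha1 hx.1 hxh,
      lintegral_johnkDensity_Ioc_of_le_half ha ha1 hx.1.le hxh]
  · rw [prod_johnkRatio_preimage_Iic_of_half_le ha ha1 hxh.le hx.2,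
      lintegral_johnkDensity_Ioc_of_half_le ha ha1 hxh.le hx.2.le]
end

section
/- Let 0 < a < 1, g(b) = (sin(πa)/π) b^{a-1}(1-b)^{-a}, f_P(p) = a(1-a) p^{a-1}(1-p)^{-a}/max(p,1-p), and α_a(p) = p + (sin(πa)/(πa(1-a)))(1-a-p)·max(p,1-p). Then for all p ∈ (0,1): (α_a(p)/p)·f_P(p) = f_P(p) − (1-p)·g'(p) and ((1-α_a(p))/(1-p))·f_P(p) = f_P(p) + p·g'(p). -/
open Real

noncomputable def gFn (a b : ℝ) : ℝ := Real.sin (π * a) / π * b ^ (a - 1) * (1 - b) ^ (-a)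

noncomputable def fPFn (a p : ℝ) : ℝ := a * (1 - a) * p ^ (a - 1) * (1 - p) ^ (-a) / max p (1 - p)

noncomputable def alphaFn (a p : ℝ) : ℝ :=
  p + (Real.sin (π * a) / (π * a * (1 - a))) * (1 - a - p) * max p (1 - p)

theorem alpha_density_identities (a : ℝ) (ha : 0 < a) (ha1 : a < 1)
    (p : ℝ) (hp : 0 < p) (hp1 : p < 1) :
    (alphaFn a p / p) * fPFn a p = fPFn a p - (1 - p) * deriv (gFn a) p ∧
    ((1 - alphaFn a p) / (1 - p)) * fPFn a p = fPFn a p + p * deriv (gFn a) p := by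
  have hp' : (0:ℝ) < 1 - p := by linarith
  set C := Real.sin (π * a) / π with hCdef
  -- derivative computation
  have h1 : HasDerivAt (fun b : ℝ => b ^ (a - 1)) ((a - 1) * p ^ (a - 1 - 1)) p :=
    Real.hasDerivAt_rpow_const (Or.inl hp.ne')
  have hu : HasDerivAt (fun b : ℝ => 1 - b) (-1) p := by
    exact (hasDerivAt_id p).const_sub 1
  have h2 : HasDerivAt (fun b : ℝ => (1 - b) ^ (-a)) ((-a) * (1 - p) ^ (-a - 1) * (-1)) p :=
    (Real.hasDerivAt_rpow_const (p := -a) (Or.inl hp'.ne')).comp p hu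
  have hg : HasDerivAt (gFn a)
      ((C * ((a - 1) * p ^ (a - 1 - 1))) * (1 - p) ^ (-a)
        + (C * p ^ (a - 1)) * ((-a) * (1 - p) ^ (-a - 1) * (-1))) p := by
    have hfun : gFn a = fun b : ℝ => (C * b ^ (a - 1)) * (1 - b) ^ (-a) := by
      funext b; simp [gFn, hCdef, mul_assoc]
    rw [hfun]
    exact (h1.const_mul C).mul h2
  have hderiv : deriv (gFn a) p =
      (C * ((a - 1) * p ^ (a - 1 - 1))) * (1 - p) ^ (-a)
        + (C * p ^ (a - 1)) * ((-a) * (1 - p) ^ (-a - 1) * (-1)) := hg.deriv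
  have hXp : p ^ (a - 1 - 1) = p ^ (a - 1) / p := by
    rw [Real.rpow_sub hp, Real.rpow_one]
  have hYp : (1 - p) ^ (-a - 1) = (1 - p) ^ (-a) / (1 - p) := by
    rw [Real.rpow_sub hp', Real.rpow_one]
  set X := p ^ (a - 1) with hX
  set Y := (1 - p) ^ (-a) with hY
  set M := max p (1 - p) with hM
  have hMpos : 0 < M := lt_of_lt_of_le hp (le_max_left _ _)
  have hπ : (π : ℝ) ≠ 0 := Real.pi_ne_zero
  have ha' : a ≠ 0 := ha.ne'
  have ha1' : (1 : ℝ) - a ≠ 0 := by linarith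
  have hsin : Real.sin (π * a) = C * π := by rw [hCdef]; field_simp
  rw [hderiv, hXp, hYp]
  constructor
  · show (alphaFn a p / p) * fPFn a p = fPFn a p - (1 - p) * _
    rw [alphaFn, fPFn, ← hX, ← hY, ← hM, hsin]
    field_simp
    ring
  · show ((1 - alphaFn a p) / (1 - p)) * fPFn a p = fPFn a p + p * _
    rw [alphaFn, fPFn, ← hX, ← hY, ← hM, hsin]
    field_simp
    ring
end

section
/- Let 0 < a < 1, and let f_P(p) = a(1-a) p^{a-1}(1-p)^{-a}/max(p,1-p) on (0,1). Then ∫₀¹ f_P(p) dp = 1. -/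
open Real MeasureTheory intervalIntegral

theorem fP_integrates_to_one (a : ℝ) (ha : 0 < a) (ha1 : a < 1) :
    ∫ p in (0 : ℝ)..1, fPFn a p = 1 := by
  have ha' : (0:ℝ) < 1 - a := by linarith
  have hmeas : Measurable (fPFn a) := by
    unfold fPFn
    fun_prop
  -- rewriting on the two halves
  have hform1 : ∀ p : ℝ, 0 < p → p ≤ 1/2 →
      fPFn a p = a * (1 - a) * (p ^ (a - 1) * (1 - p) ^ (-a - 1)) := by
    intro p hp0 hp2
    have h1p : (0:ℝ) < 1 - p := by linarith
    have hmax : max p (1 - p) = 1 - p := max_eq_right (by linarith)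
    rw [fPFn, hmax, Real.rpow_sub_one h1p.ne' (-a)]
    ring
  have hform2 : ∀ p : ℝ, 1/2 ≤ p → p < 1 →
      fPFn a p = a * (1 - a) * (p ^ (a - 1 - 1) * (1 - p) ^ (-a)) := by
    intro p hp2 hp1
    have hp0 : (0:ℝ) < p := by linarith
    have hmax : max p (1 - p) = p := max_eq_left (by linarith)
    rw [fPFn, hmax, Real.rpow_sub_one hp0.ne' (a - 1)]
    ring
  -- integrability on [0, 1/2]
  have hint1 : IntervalIntegrable (fPFn a) volume 0 (1/2) := by
    have hg : IntervalIntegrable (fun p : ℝ => (a * (1-a) * (1/2 : ℝ)^(-a-1)) * p ^ (a-1))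
        volume 0 (1/2) :=
      (intervalIntegral.intervalIntegrable_rpow' (by linarith)).const_mul _
    refine hg.mono_fun hmeas.aestronglyMeasurable ?_
    filter_upwards [ae_restrict_mem measurableSet_uIoc] with p hp
    rw [Set.uIoc_of_le (by norm_num : (0:ℝ) ≤ 1/2)] at hp
    obtain ⟨hp0, hp2⟩ := hp
    have h1p : (1:ℝ)/2 ≤ 1 - p := by linarith
    have hb : (1 - p) ^ (-a - 1) ≤ (1/2 : ℝ) ^ (-a - 1) :=
      Real.rpow_le_rpow_of_nonpos (by norm_num) h1p (by linarith)
    rw [hform1 p hp0 hp2]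
    have hnorm : ∀ x : ℝ, 0 ≤ x → ‖x‖ = x := fun x hx => by
      rw [Real.norm_eq_abs, abs_of_nonneg hx]
    rw [hnorm _ (by positivity), hnorm _ (by positivity)]
    calc a * (1-a) * (p ^ (a-1) * (1-p) ^ (-a-1))
        ≤ a * (1-a) * (p ^ (a-1) * (1/2:ℝ) ^ (-a-1)) := by
          apply mul_le_mul_of_nonneg_left _ (by positivity)
          exact mul_le_mul_of_nonneg_left hb (by positivity)
      _ = a * (1-a) * (1/2:ℝ)^(-a-1) * p ^ (a-1) := by ring
  -- integrability on [1/2, 1]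
  have hint2 : IntervalIntegrable (fPFn a) volume (1/2) 1 := by
    have hg0 : IntervalIntegrable (fun p : ℝ => p ^ (-a)) volume 0 (1/2) :=
      intervalIntegral.intervalIntegrable_rpow' (by linarith)
    have hg1 : IntervalIntegrable (fun p : ℝ => (1 - p) ^ (-a)) volume (1/2) 1 := by
      have := (hg0.comp_sub_left 1).symm
      norm_num at this
      exact this
    have hg : IntervalIntegrable (fun p : ℝ => (a * (1-a) * (1/2:ℝ)^(a-1-1)) * (1-p) ^ (-a))
        volume (1/2) 1 := hg1.const_mul _
    refine hg.mono_fun hmeas.aestronglyMeasurable ?_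
    filter_upwards [ae_restrict_mem measurableSet_uIoc] with p hp
    rw [Set.uIoc_of_le (by norm_num : (1:ℝ)/2 ≤ 1)] at hp
    obtain ⟨hp2, hp1⟩ := hp
    have hp0 : (0:ℝ) < p := by linarith
    have h1p : (0:ℝ) ≤ 1 - p := by linarith
    have hb : p ^ (a - 1 - 1) ≤ (1/2 : ℝ) ^ (a - 1 - 1) :=
      Real.rpow_le_rpow_of_nonpos (by norm_num) hp2.le (by linarith)
    rcases eq_or_lt_of_le hp1 with rfl | hp1'
    · have : fPFn a 1 = 0 := by
        rw [fPFn]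
        norm_num
        rw [Real.zero_rpow (by linarith : -a ≠ 0)]
        simp
      rw [this]
      simp only [norm_mul, Real.norm_eq_abs, norm_zero]
      positivity
    · rw [hform2 p hp2.le hp1']
      have hnorm : ∀ x : ℝ, 0 ≤ x → ‖x‖ = x := fun x hx => by
        rw [Real.norm_eq_abs, abs_of_nonneg hx]
      rw [hnorm _ (by positivity), hnorm _ (by positivity)]
      calc a * (1-a) * (p ^ (a-1-1) * (1-p) ^ (-a))
          ≤ a * (1-a) * ((1/2:ℝ) ^ (a-1-1) * (1-p) ^ (-a)) := by
            apply mul_le_mul_of_nonneg_left _ (by positivity)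
            exact mul_le_mul_of_nonneg_right hb (by positivity)
        _ = a * (1-a) * (1/2:ℝ)^(a-1-1) * (1-p) ^ (-a) := by ring
  -- first FTC piece
  have key1 : ∫ p in (0:ℝ)..(1/2), fPFn a p = 1 - a := by
    set F : ℝ → ℝ := fun p => (1-a) * (p ^ a * (1-p) ^ (-a)) with hF
    have hcont : ContinuousOn F (Set.Icc 0 (1/2)) := by
      apply ContinuousOn.mul continuousOn_const
      apply ContinuousOn.mul
      · exact fun x _ => (Real.continuousAt_rpow_const x a (Or.inr ha.le)).continuousWithinAt
      · intro x hx
        have : (1:ℝ) - x ≠ 0 := by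
          have := hx.2; simp only [Set.mem_Icc] at hx; linarith [hx.2]
        exact ((Real.continuousAt_rpow_const (1-x) (-a) (Or.inl this)).comp
          ((continuous_const.sub continuous_id).continuousAt)).continuousWithinAt
    have hderiv : ∀ x ∈ Set.Ioo (0:ℝ) (1/2), HasDerivAt F (fPFn a x) x := by
      intro x hx
      obtain ⟨hx0, hx2⟩ := hx
      have h1x : (0:ℝ) < 1 - x := by linarith
      have h1 : HasDerivAt (fun p : ℝ => p ^ a) (a * x ^ (a-1)) x :=
        Real.hasDerivAt_rpow_const (Or.inl hx0.ne')
      have h2 := ((hasDerivAt_id x).const_sub 1).rpow_const (p := -a) (Or.inl (by simpa using h1x.ne'))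
      have h3 := (h1.mul h2).const_mul (1-a)
      convert h3 using 1
      · rfl
      · rfl
      · rfl
      rw [hform1 x hx0 hx2.le]
      have e1 : x ^ a = x ^ (a-1) * x := by
        rw [← Real.rpow_add_one hx0.ne' (a-1)]; congr 1; ring
      have e2 : (1-x) ^ (-a) = (1-x) ^ (-a-1) * (1-x) := by
        rw [← Real.rpow_add_one h1x.ne' (-a-1)]; congr 1; ring
      simp only [id_eq]
      rw [e1, e2]
      ring
    have := intervalIntegral.integral_eq_sub_of_hasDerivAt_of_le (by norm_num)
      hcont hderiv hint1
    rw [this, hF]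
    have h0 : ((0:ℝ)) ^ a = 0 := Real.zero_rpow ha.ne'
    have hhalf : ((1:ℝ) - 1/2) = 1/2 := by norm_num
    simp only [hhalf, h0]
    rw [← Real.rpow_add (by norm_num : (0:ℝ) < 1/2)]
    norm_num
  -- second FTC piece
  have key2 : ∫ p in (1/2:ℝ)..1, fPFn a p = a := by
    set F : ℝ → ℝ := fun p => -(a * (p ^ (a-1) * (1-p) ^ (1-a))) with hF
    have hcont : ContinuousOn F (Set.Icc (1/2) 1) := by
      apply ContinuousOn.neg
      apply ContinuousOn.mul continuousOn_const
      apply ContinuousOn.mul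
      · intro x hx
        simp only [Set.mem_Icc] at hx
        have : x ≠ 0 := by linarith [hx.1]
        exact (Real.continuousAt_rpow_const x (a-1) (Or.inl this)).continuousWithinAt
      · intro x hx
        exact ((Real.continuousAt_rpow_const (1-x) (1-a) (Or.inr ha'.le)).comp
          ((continuous_const.sub continuous_id).continuousAt)).continuousWithinAt
    have hderiv : ∀ x ∈ Set.Ioo (1/2:ℝ) 1, HasDerivAt F (fPFn a x) x := by
      intro x hx
      obtain ⟨hx2, hx1⟩ := hx
      have hx0 : (0:ℝ) < x := by linarith
      have h1x : (0:ℝ) < 1 - x := by linarith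
      have h1 : HasDerivAt (fun p : ℝ => p ^ (a-1)) ((a-1) * x ^ (a-1-1)) x :=
        Real.hasDerivAt_rpow_const (Or.inl hx0.ne')
      have h2 := ((hasDerivAt_id x).const_sub 1).rpow_const (p := 1-a) (Or.inl (by simpa using h1x.ne'))
      have h3 := (((h1.mul h2).const_mul a)).neg
      convert h3 using 1
      · rfl
      · rfl
      · rfl
      rw [hform2 x hx2.le hx1]
      have e1 : (1-x) ^ (1-a) = (1-x) ^ (-a) * (1-x) := by
        rw [← Real.rpow_add_one h1x.ne' (-a)]; congr 1; ring
      have e2 : (1-x) ^ (1-a-1) = (1-x) ^ (-a) := by congr 1; ring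
      have e3 : x ^ (a-1) = x ^ (a-1-1) * x := by
        rw [← Real.rpow_add_one hx0.ne' (a-1-1)]; congr 1; ring
      simp only [id_eq]
      rw [e3, e1, e2]
      ring
    have := intervalIntegral.integral_eq_sub_of_hasDerivAt_of_le (by norm_num)
      hcont hderiv hint2
    rw [this, hF]
    have h0 : ((1:ℝ) - 1) ^ (1-a) = 0 := by
      norm_num
      exact Real.zero_rpow (by linarith)
    have hhalf : ((1:ℝ) - 1/2) = 1/2 := by norm_num
    simp only [hhalf, h0]
    rw [← Real.rpow_add (by norm_num : (0:ℝ) < 1/2)]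
    norm_num
  rw [← intervalIntegral.integral_add_adjacent_intervals hint1 hint2, key1, key2]
  ring
end

section
/- Let 0 < a < 1, f_P(p) = a(1-a) p^{a-1}(1-p)^{-a}/max(p,1-p), g(b) = (sin(πa)/π) b^{a-1}(1-b)^{-a}, and α_a(p) = p + (sin(πa)/(πa(1-a)))(1-a-p)·max(p,1-p). Then for every b ∈ (0,1), ∫_b^1 (α_a(p)/p) f_P(p) dp + ∫₀^b ((1-α_a(p))/(1-p)) f_P(p) dp = g(b). -/
open Real MeasureTheory intervalIntegral Set Filter Topology

section helpers
variable {a : ℝ}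

lemma beta_val (ha : 0 < a) (ha1 : a < 1) :
    ∫ p in (0:ℝ)..1, p ^ (a-1) * (1-p) ^ (-a) = π / Real.sin (π * a) := by
  have h1 : Complex.Gamma a * Complex.Gamma (1 - a) =
      Complex.Gamma ((a:ℂ) + (1 - a)) * Complex.betaIntegral a (1 - a) :=
    Complex.Gamma_mul_Gamma_eq_betaIntegral (by simpa using ha) (by simp [Complex.sub_re]; linarith)
  have h2 : ((a:ℂ) + (1 - a)) = 1 := by ring
  rw [h2, Complex.Gamma_one, one_mul] at h1
  have h3 : Complex.betaIntegral a (1 - a)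
      = ((∫ p in (0:ℝ)..1, p ^ (a-1) * (1-p) ^ (-a) : ℝ) : ℂ) := by
    rw [Complex.betaIntegral, ← intervalIntegral.integral_ofReal]
    refine intervalIntegral.integral_congr fun x hx => ?_
    rw [uIcc_of_le (by norm_num : (0:ℝ) ≤ 1)] at hx
    push_cast
    rw [Complex.ofReal_cpow hx.1, Complex.ofReal_cpow (by linarith [hx.2] : (0:ℝ) ≤ 1 - x)]
    push_cast
    ring_nf
  rw [h3] at h1
  have h4 : ((1:ℂ) - a) = ((1 - a : ℝ) : ℂ) := by push_cast; ring
  rw [h4, Complex.Gamma_ofReal, Complex.Gamma_ofReal, ← Complex.ofReal_mul,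
    Real.Gamma_mul_Gamma_one_sub] at h1
  exact_mod_cast h1.symm

lemma contOn_rpow {c : ℝ} {s : Set ℝ} (h : ∀ x ∈ s, x ≠ 0) :
    ContinuousOn (fun x : ℝ => x ^ c) s :=
  fun x hx => (Real.continuousAt_rpow_const x c (Or.inl (h x hx))).continuousWithinAt

lemma contOn_one_sub_rpow {c : ℝ} {s : Set ℝ} (h : ∀ x ∈ s, (1:ℝ) - x ≠ 0) :
    ContinuousOn (fun x : ℝ => (1 - x) ^ c) s := by
  have : ContinuousOn ((fun y : ℝ => y ^ c) ∘ (fun x : ℝ => 1 - x)) s := by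
    refine (contOn_rpow (s := (fun x : ℝ => 1 - x) '' s) ?_).comp
      (Continuous.continuousOn (by continuity)) (mapsTo_image _ _)
    rintro y ⟨x, hx, rfl⟩; exact h x hx
  exact this

lemma intInt_one_sub_rpow {c : ℝ} (hc : -1 < c) (x y : ℝ) :
    IntervalIntegrable (fun p : ℝ => (1 - p) ^ c) volume x y := by
  have := (intervalIntegral.intervalIntegrable_rpow' (a := 1 - x) (b := 1 - y) hc).comp_sub_left 1
  simpa using this

lemma intInt_left {c d x y : ℝ} (hc : -1 < c) (hy : ∀ p ∈ uIcc x y, (1:ℝ) - p ≠ 0) :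
    IntervalIntegrable (fun p : ℝ => p ^ c * (1 - p) ^ d) volume x y :=
  (intervalIntegral.intervalIntegrable_rpow' hc).mul_continuousOn (contOn_one_sub_rpow hy)

lemma intInt_right {c d x y : ℝ} (hd : -1 < d) (hx : ∀ p ∈ uIcc x y, p ≠ 0) :
    IntervalIntegrable (fun p : ℝ => p ^ c * (1 - p) ^ d) volume x y :=
  (intInt_one_sub_rpow hd x y).continuousOn_mul (contOn_rpow hx)

lemma hasDeriv_F1 {p : ℝ} (hp : 0 < p) (hp1 : p < 1) :
    HasDerivAt (fun p : ℝ => p ^ a * (1 - p) ^ (-a))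
      (a * (p ^ (a-1) * (1 - p) ^ (-a-1))) p := by
  have h1 : HasDerivAt (fun p : ℝ => p ^ a) (a * p ^ (a-1)) p :=
    Real.hasDerivAt_rpow_const (Or.inl hp.ne')
  have h1p : (0:ℝ) < 1 - p := by linarith
  have h2 : HasDerivAt (fun p : ℝ => (1 - p) ^ (-a)) (-a * (1-p) ^ (-a-1) * (-1)) p := by
    have hb : HasDerivAt (fun p : ℝ => 1 - p) (-1) p := (hasDerivAt_id p).const_sub 1
    exact (Real.hasDerivAt_rpow_const (p := -a) (Or.inl h1p.ne')).comp p hb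
  have := h1.mul h2
  refine this.congr_deriv ?_
  have e1 : p ^ a = p ^ (a-1) * p := by
    rw [← Real.rpow_add_one hp.ne']; ring_nf
  have e2 : (1-p) ^ (-a) = (1-p) ^ (-a-1) * (1-p) := by
    rw [← Real.rpow_add_one h1p.ne']; ring_nf
  rw [e1, e2]; ring

lemma hasDeriv_F2 {p : ℝ} (hp : 0 < p) (hp1 : p < 1) :
    HasDerivAt (fun p : ℝ => p ^ (a-1) * (1 - p) ^ (1-a))
      ((a-1) * (p ^ (a-2) * (1 - p) ^ (-a))) p := by
  have h1 : HasDerivAt (fun p : ℝ => p ^ (a-1)) ((a-1) * p ^ (a-1-1)) p :=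
    Real.hasDerivAt_rpow_const (Or.inl hp.ne')
  have h1p : (0:ℝ) < 1 - p := by linarith
  have h2 : HasDerivAt (fun p : ℝ => (1 - p) ^ (1-a)) ((1-a) * (1-p) ^ (1-a-1) * (-1)) p := by
    have hb : HasDerivAt (fun p : ℝ => 1 - p) (-1) p := (hasDerivAt_id p).const_sub 1
    exact (Real.hasDerivAt_rpow_const (p := 1-a) (Or.inl h1p.ne')).comp p hb
  have := h1.mul h2
  refine this.congr_deriv ?_
  have e0 : a - 1 - 1 = a - 2 := by ring
  have e1 : p ^ (a-1) = p ^ (a-2) * p := by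
    rw [← Real.rpow_add_one hp.ne']; ring_nf
  have e2 : (1-p) ^ (1-a) = (1-p) ^ (-a) * (1-p) := by
    rw [← Real.rpow_add_one h1p.ne']; ring_nf
  have e3 : (1-p) ^ (1-a-1) = (1-p) ^ (-a) := by ring_nf
  rw [e0, e1, e2, e3]; ring

lemma contAt_one_sub_rpow {c x : ℝ} (h : (1:ℝ) - x ≠ 0) :
    ContinuousAt (fun p : ℝ => (1 - p) ^ c) x := by
  have hc : Continuous (fun p : ℝ => 1 - p) := by continuity
  have : ContinuousAt ((fun y : ℝ => y ^ c) ∘ (fun p : ℝ => 1 - p)) x :=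
    (Real.continuousAt_rpow_const _ c (Or.inl h)).comp hc.continuousAt
  exact this

lemma hMax (p : ℝ) : 0 < max p (1 - p) := by
  rcases lt_or_ge 0 p with h | h
  · exact lt_max_of_lt_left h
  · exact lt_max_of_lt_right (by linarith)

-- FTC for F1 on (0, x]
lemma int_F1' (ha : 0 < a) {x : ℝ} (hx : 0 < x) (hx1 : x < 1) :
    ∫ p in (0:ℝ)..x, a * (p ^ (a-1) * (1-p) ^ (-a-1)) = x ^ a * (1-x) ^ (-a) := by
  have hint : IntervalIntegrable (fun p : ℝ => a * (p ^ (a-1) * (1-p) ^ (-a-1))) volume 0 x := by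
    have : IntervalIntegrable (fun p : ℝ => p ^ (a-1) * (1-p) ^ (-a-1)) volume 0 x := by
      refine intInt_left (by linarith) (fun p hp => ?_)
      rw [uIcc_of_le hx.le] at hp
      have := hp.2; intro h; linarith [h, hx1]
    simpa using this.const_mul a
  have h := intervalIntegral.integral_eq_sub_of_hasDerivAt_of_tendsto
    (f := fun p : ℝ => p ^ a * (1 - p) ^ (-a))
    (f' := fun p : ℝ => a * (p ^ (a-1) * (1-p) ^ (-a-1)))
    hx (fa := 0) (fb := x ^ a * (1-x) ^ (-a))
    (fun p hp => hasDeriv_F1 hp.1 (lt_trans hp.2 hx1)) hint ?_ ?_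
  · rw [h, sub_zero]
  · -- tendsto at 0⁺
    have h1 : Tendsto (fun p : ℝ => p ^ a) (𝓝[>] (0:ℝ)) (𝓝 0) := by
      have := (Real.continuousAt_rpow_const 0 a (Or.inr ha.le)).tendsto
      rw [Real.zero_rpow ha.ne'] at this
      exact this.mono_left nhdsWithin_le_nhds
    have h2 : Tendsto (fun p : ℝ => (1 - p) ^ (-a)) (𝓝[>] (0:ℝ)) (𝓝 ((1:ℝ) ^ (-a))) := by
      have hc : ContinuousAt (fun p : ℝ => (1 - p) ^ (-a)) 0 :=
        contAt_one_sub_rpow (by norm_num)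
      simpa using hc.tendsto.mono_left nhdsWithin_le_nhds
    simpa using h1.mul h2
  · -- tendsto at x⁻ : continuity
    have hc : ContinuousAt (fun p : ℝ => p ^ a * (1 - p) ^ (-a)) x := by
      refine ContinuousAt.mul (Real.continuousAt_rpow_const x a (Or.inl hx.ne')) ?_
      exact contAt_one_sub_rpow (by intro h; linarith [hx1])
    exact hc.tendsto.mono_left nhdsWithin_le_nhds

-- FTC for F2 on [x, 1)
lemma int_F2' (ha1 : a < 1) {x : ℝ} (hx : 0 < x) (hx1 : x < 1) :
    ∫ p in x..(1:ℝ), (a-1) * (p ^ (a-2) * (1-p) ^ (-a)) = - (x ^ (a-1) * (1-x) ^ (1-a)) := by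
  have hint : IntervalIntegrable (fun p : ℝ => (a-1) * (p ^ (a-2) * (1-p) ^ (-a))) volume x 1 := by
    have : IntervalIntegrable (fun p : ℝ => p ^ (a-2) * (1-p) ^ (-a)) volume x 1 := by
      refine intInt_right (by linarith) (fun p hp => ?_)
      rw [uIcc_of_le hx1.le] at hp
      exact (lt_of_lt_of_le hx hp.1).ne'
    simpa using this.const_mul (a-1)
  have h := intervalIntegral.integral_eq_sub_of_hasDerivAt_of_tendsto
    (f := fun p : ℝ => p ^ (a-1) * (1 - p) ^ (1-a))
    (f' := fun p : ℝ => (a-1) * (p ^ (a-2) * (1-p) ^ (-a)))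
    hx1 (fa := x ^ (a-1) * (1-x) ^ (1-a)) (fb := 0)
    (fun p hp => hasDeriv_F2 (lt_trans hx hp.1) hp.2) hint ?_ ?_
  · rw [h, zero_sub]
  · have hc : ContinuousAt (fun p : ℝ => p ^ (a-1) * (1 - p) ^ (1-a)) x := by
      refine ContinuousAt.mul (Real.continuousAt_rpow_const x (a-1) (Or.inl hx.ne')) ?_
      exact contAt_one_sub_rpow (by intro h; linarith [hx1])
    exact hc.tendsto.mono_left nhdsWithin_le_nhds
  · have h1 : Tendsto (fun p : ℝ => p ^ (a-1)) (𝓝[<] (1:ℝ)) (𝓝 ((1:ℝ) ^ (a-1))) :=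
      (Real.continuousAt_rpow_const 1 (a-1) (Or.inl one_ne_zero)).tendsto.mono_left
        nhdsWithin_le_nhds
    have h2 : Tendsto (fun p : ℝ => (1 - p) ^ (1-a)) (𝓝[<] (1:ℝ)) (𝓝 0) := by
      have hy : Tendsto (fun p : ℝ => 1 - p) (𝓝[<] (1:ℝ)) (𝓝 0) := by
        have hc : Continuous (fun p : ℝ => 1 - p) := by continuity
        have := (hc.tendsto (1:ℝ)).mono_left (nhdsWithin_le_nhds (s := Iio (1:ℝ)))
        simpa using this
      have hz : Tendsto (fun y : ℝ => y ^ (1-a)) (𝓝 (0:ℝ)) (𝓝 0) := by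
        have := (Real.continuousAt_rpow_const 0 (1-a) (Or.inr (by linarith))).tendsto
        rwa [Real.zero_rpow (by intro h; linarith)] at this
      exact hz.comp hy
    have := h1.mul h2
    simpa using this

end helpers
section part2
variable {a : ℝ}

lemma fP_int0 (ha : 0 < a) {b : ℝ} (hb : 0 ≤ b) (hb1 : b < 1) :
    IntervalIntegrable (fPFn a) volume 0 b := by
  have heq : fPFn a = fun p : ℝ => p ^ (a-1) * (a * (1-a) * (1-p) ^ (-a) / max p (1-p)) := by
    funext p; unfold fPFn; ring
  rw [heq]
  refine (intervalIntegral.intervalIntegrable_rpow' (by linarith)).mul_continuousOn ?_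
  rw [uIcc_of_le hb]
  refine ContinuousOn.div ?_ ?_ (fun p _ => (hMax p).ne')
  · exact continuousOn_const.mul (contOn_one_sub_rpow (fun p hp => by
      have := hp.2; intro h; linarith))
  · exact (continuous_id.max (continuous_const.sub continuous_id)).continuousOn

lemma fP_int1 (ha : 0 < a) (ha1 : a < 1) {b : ℝ} (hb : 0 < b) (hb1 : b ≤ 1) :
    IntervalIntegrable (fPFn a) volume b 1 := by
  have heq : fPFn a = fun p : ℝ => (1-p) ^ (-a) * (a * (1-a) * p ^ (a-1) / max p (1-p)) := by
    funext p; unfold fPFn; ring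
  rw [heq]
  refine (intInt_one_sub_rpow (by linarith) b 1).mul_continuousOn ?_
  rw [uIcc_of_le hb1]
  refine ContinuousOn.div ?_ ?_ (fun p _ => (hMax p).ne')
  · exact continuousOn_const.mul (contOn_rpow (fun p hp => (lt_of_lt_of_le hb hp.1).ne'))
  · exact (continuous_id.max (continuous_const.sub continuous_id)).continuousOn

lemma intA (ha : 0 < a) (ha1 : a < 1) {b : ℝ} (hb : 0 < b) (hb1 : b < 1) :
    ∫ p in b..(1:ℝ), (alphaFn a p / p) * fPFn a p
      = (∫ p in b..(1:ℝ), fPFn a p)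
        + Real.sin (π*a)/π * (b ^ (a-1) * (1-b) ^ (1-a)
            - ∫ p in b..(1:ℝ), p ^ (a-1) * (1-p) ^ (-a)) := by
  have hπ := Real.pi_ne_zero
  have ha' : a ≠ 0 := ha.ne'
  have ha1' : (1:ℝ) - a ≠ 0 := by intro h; linarith
  have hpne : ∀ p ∈ uIcc b 1, p ≠ 0 := fun p hp => by
    rw [uIcc_of_le hb1.le] at hp; exact (lt_of_lt_of_le hb hp.1).ne'
  have hintf := fP_int1 ha ha1 hb hb1.le
  have hintu : IntervalIntegrable (fun p : ℝ => (1-a-p) * (p ^ (a-2) * (1-p) ^ (-a)))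
      volume b 1 := by
    have heq : (fun p : ℝ => (1-a-p) * (p ^ (a-2) * (1-p) ^ (-a)))
        = fun p : ℝ => (1-p) ^ (-a) * ((1-a-p) * p ^ (a-2)) := by funext p; ring
    rw [heq]
    exact (intInt_one_sub_rpow (by linarith) b 1).mul_continuousOn
      (((continuous_const.sub continuous_id).continuousOn).mul (contOn_rpow hpne))
  have hintq : IntervalIntegrable (fun p : ℝ => p ^ (a-1) * (1-p) ^ (-a)) volume b 1 :=
    intInt_right (by linarith) hpne
  have hintF2' : IntervalIntegrable (fun p : ℝ => (a-1) * (p ^ (a-2) * (1-p) ^ (-a)))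
      volume b 1 := by
    have := (intInt_right (c := a-2) (by linarith : (-1:ℝ) < -a) hpne).const_mul (a-1)
    simpa using this
  have hcongr : EqOn (fun p : ℝ => (alphaFn a p / p) * fPFn a p)
      (fun p : ℝ => fPFn a p
        + Real.sin (π*a)/π * ((1-a-p) * (p ^ (a-2) * (1-p) ^ (-a)))) (uIcc b 1) := by
    intro p hp
    have hp0 : p ≠ 0 := hpne p hp
    have hM := (hMax p).ne'
    have e1 : p ^ (a-1) = p ^ (a-2) * p := by rw [← Real.rpow_add_one hp0]; ring_nf
    simp only [fPFn, alphaFn, e1]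
    field_simp
  have hu_val : ∫ p in b..(1:ℝ), (1-a-p) * (p ^ (a-2) * (1-p) ^ (-a))
      = b ^ (a-1) * (1-b) ^ (1-a) - ∫ p in b..(1:ℝ), p ^ (a-1) * (1-p) ^ (-a) := by
    have hcongr2 : EqOn (fun p : ℝ => (1-a-p) * (p ^ (a-2) * (1-p) ^ (-a)))
        (fun p : ℝ => (-((a-1) * (p ^ (a-2) * (1-p) ^ (-a)))) - p ^ (a-1) * (1-p) ^ (-a))
        (uIcc b 1) := by
      intro p hp
      have e1 : p ^ (a-1) = p ^ (a-2) * p := by rw [← Real.rpow_add_one (hpne p hp)]; ring_nf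
      simp only [e1]; ring
    have hint1 : IntervalIntegrable
        (fun p : ℝ => -((a-1) * (p ^ (a-2) * (1-p) ^ (-a)))) volume b 1 := by
      exact hintF2'.neg
    rw [intervalIntegral.integral_congr hcongr2,
        intervalIntegral.integral_sub hint1 hintq, intervalIntegral.integral_neg,
        int_F2' ha1 hb hb1]
    ring
  rw [intervalIntegral.integral_congr hcongr,
      intervalIntegral.integral_add hintf (hintu.const_mul _),
      intervalIntegral.integral_const_mul, hu_val]

lemma intB (ha : 0 < a) (ha1 : a < 1) {b : ℝ} (hb : 0 < b) (hb1 : b < 1) :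
    ∫ p in (0:ℝ)..b, ((1 - alphaFn a p) / (1-p)) * fPFn a p
      = (∫ p in (0:ℝ)..b, fPFn a p)
        - Real.sin (π*a)/π * ((∫ p in (0:ℝ)..b, p ^ (a-1) * (1-p) ^ (-a))
            - b ^ a * (1-b) ^ (-a)) := by
  have hπ := Real.pi_ne_zero
  have ha' : a ≠ 0 := ha.ne'
  have ha1' : (1:ℝ) - a ≠ 0 := by intro h; linarith
  have hpne : ∀ p ∈ uIcc 0 b, (1:ℝ) - p ≠ 0 := fun p hp => by
    rw [uIcc_of_le hb.le] at hp; intro h; linarith [hp.2]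
  have hintf := fP_int0 ha hb.le hb1
  have hintv : IntervalIntegrable (fun p : ℝ => (1-a-p) * (p ^ (a-1) * (1-p) ^ (-a-1)))
      volume 0 b := by
    have heq : (fun p : ℝ => (1-a-p) * (p ^ (a-1) * (1-p) ^ (-a-1)))
        = fun p : ℝ => p ^ (a-1) * ((1-a-p) * (1-p) ^ (-a-1)) := by funext p; ring
    rw [heq]
    exact (intervalIntegral.intervalIntegrable_rpow' (by linarith)).mul_continuousOn
      (((continuous_const.sub continuous_id).continuousOn).mul (contOn_one_sub_rpow hpne))
  have hintq : IntervalIntegrable (fun p : ℝ => p ^ (a-1) * (1-p) ^ (-a)) volume 0 b :=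
    intInt_left (by linarith) hpne
  have hintF1' : IntervalIntegrable (fun p : ℝ => a * (p ^ (a-1) * (1-p) ^ (-a-1)))
      volume 0 b := by
    have := (intInt_left (d := -a-1) (by linarith : (-1:ℝ) < a-1) hpne).const_mul a
    simpa using this
  have hcongr : EqOn (fun p : ℝ => ((1 - alphaFn a p) / (1-p)) * fPFn a p)
      (fun p : ℝ => fPFn a p
        - Real.sin (π*a)/π * ((1-a-p) * (p ^ (a-1) * (1-p) ^ (-a-1)))) (uIcc 0 b) := by
    intro p hp
    have hp1 : (1:ℝ) - p ≠ 0 := hpne p hp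
    have hM := (hMax p).ne'
    have e2 : (1-p) ^ (-a) = (1-p) ^ (-a-1) * (1-p) := by
      rw [← Real.rpow_add_one hp1]; ring_nf
    simp only [fPFn, alphaFn, e2]
    field_simp
    ring
  have hv_val : ∫ p in (0:ℝ)..b, (1-a-p) * (p ^ (a-1) * (1-p) ^ (-a-1))
      = (∫ p in (0:ℝ)..b, p ^ (a-1) * (1-p) ^ (-a)) - b ^ a * (1-b) ^ (-a) := by
    have hcongr2 : EqOn (fun p : ℝ => (1-a-p) * (p ^ (a-1) * (1-p) ^ (-a-1)))
        (fun p : ℝ => p ^ (a-1) * (1-p) ^ (-a) - a * (p ^ (a-1) * (1-p) ^ (-a-1)))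
        (uIcc 0 b) := by
      intro p hp
      have e2 : (1-p) ^ (-a) = (1-p) ^ (-a-1) * (1-p) := by
        rw [← Real.rpow_add_one (hpne p hp)]; ring_nf
      simp only [e2]; ring
    rw [intervalIntegral.integral_congr hcongr2,
        intervalIntegral.integral_sub hintq hintF1', int_F1' ha hb hb1]
  rw [intervalIntegral.integral_congr hcongr,
      intervalIntegral.integral_sub hintf (hintv.const_mul _),
      intervalIntegral.integral_const_mul, hv_val]

end part2
section part3
variable {a : ℝ}

lemma int_f_left (ha : 0 < a) (ha1 : a < 1) :
    ∫ p in (0:ℝ)..(1/2 : ℝ), fPFn a p = 1 - a := by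
  have hcongr : EqOn (fun p : ℝ => fPFn a p)
      (fun p : ℝ => (1-a) * (a * (p ^ (a-1) * (1-p) ^ (-a-1)))) (uIcc 0 (1/2)) := by
    intro p hp
    rw [uIcc_of_le (by norm_num : (0:ℝ) ≤ 1/2)] at hp
    have hp1 : (1:ℝ) - p ≠ 0 := by intro h; have := hp.2; linarith
    have hmax : max p (1-p) = 1 - p := max_eq_right (by linarith [hp.2])
    have e2 : (1-p) ^ (-a) = (1-p) ^ (-a-1) * (1-p) := by
      rw [← Real.rpow_add_one hp1]; ring_nf
    simp only [fPFn, hmax, e2]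
    field_simp
  rw [intervalIntegral.integral_congr hcongr, intervalIntegral.integral_const_mul,
      int_F1' ha (by norm_num) (by norm_num)]
  have h12 : (1:ℝ) - 1/2 = 1/2 := by norm_num
  rw [h12, ← Real.rpow_add (by norm_num : (0:ℝ) < 1/2)]
  norm_num

lemma int_f_right (ha : 0 < a) (ha1 : a < 1) :
    ∫ p in (1/2 : ℝ)..(1:ℝ), fPFn a p = a := by
  have hcongr : EqOn (fun p : ℝ => fPFn a p)
      (fun p : ℝ => -(a * ((a-1) * (p ^ (a-2) * (1-p) ^ (-a))))) (uIcc (1/2) 1) := by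
    intro p hp
    rw [uIcc_of_le (by norm_num : (1/2:ℝ) ≤ 1)] at hp
    have hp0 : p ≠ 0 := by intro h; have := hp.1; rw [h] at this; norm_num at this
    have hmax : max p (1-p) = p := max_eq_left (by linarith [hp.1])
    have e1 : p ^ (a-1) = p ^ (a-2) * p := by rw [← Real.rpow_add_one hp0]; ring_nf
    simp only [fPFn, hmax, e1]
    field_simp
    ring
  have hint : IntervalIntegrable (fun p : ℝ => (a-1) * (p ^ (a-2) * (1-p) ^ (-a)))
      volume (1/2) 1 := by
    have : IntervalIntegrable (fun p : ℝ => p ^ (a-2) * (1-p) ^ (-a)) volume (1/2) 1 := by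
      refine intInt_right (by linarith) (fun p hp => ?_)
      rw [uIcc_of_le (by norm_num : (1/2:ℝ) ≤ 1)] at hp
      intro h; rw [h] at hp; norm_num at hp
    simpa using this.const_mul (a-1)
  rw [intervalIntegral.integral_congr hcongr]
  have hval := int_F2' (a := a) ha1 (by norm_num : (0:ℝ) < 1/2) (by norm_num : (1/2:ℝ) < 1)
  have : ∫ p in (1/2:ℝ)..(1:ℝ), -(a * ((a-1) * (p ^ (a-2) * (1-p) ^ (-a))))
      = -(a * ∫ p in (1/2:ℝ)..(1:ℝ), (a-1) * (p ^ (a-2) * (1-p) ^ (-a))) := by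
    rw [← intervalIntegral.integral_const_mul, ← intervalIntegral.integral_neg]
  rw [this, hval]
  have h12 : (1:ℝ) - 1/2 = 1/2 := by norm_num
  rw [h12, ← Real.rpow_add (by norm_num : (0:ℝ) < 1/2)]
  norm_num

lemma int_f_total (ha : 0 < a) (ha1 : a < 1) :
    ∫ p in (0:ℝ)..(1:ℝ), fPFn a p = 1 := by
  rw [← intervalIntegral.integral_add_adjacent_intervals
      (fP_int0 ha (by norm_num : (0:ℝ) ≤ 1/2) (by norm_num))
      (fP_int1 ha ha1 (by norm_num : (0:ℝ) < 1/2) (by norm_num)),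
    int_f_left ha ha1, int_f_right ha ha1]
  ring

end part3

theorem marginal_density_identity (a : ℝ) (ha : 0 < a) (ha1 : a < 1)
    (b : ℝ) (hb : 0 < b) (hb1 : b < 1) :
    (∫ p in b..(1 : ℝ), (alphaFn a p / p) * fPFn a p)
      + (∫ p in (0 : ℝ)..b, ((1 - alphaFn a p) / (1 - p)) * fPFn a p)
      = gFn a b := by
  have hπ := Real.pi_ne_zero
  have hsin : Real.sin (π * a) ≠ 0 := by
    refine (Real.sin_pos_of_pos_of_lt_pi (by positivity) ?_).ne'
    nlinarith [Real.pi_pos]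
  rw [intA ha ha1 hb hb1, intB ha ha1 hb hb1]
  have hfsum : (∫ p in (0:ℝ)..b, fPFn a p) + (∫ p in b..(1:ℝ), fPFn a p) = 1 := by
    rw [intervalIntegral.integral_add_adjacent_intervals (fP_int0 ha hb.le hb1)
      (fP_int1 ha ha1 hb hb1.le)]
    exact int_f_total ha ha1
  have hq0 : IntervalIntegrable (fun p : ℝ => p ^ (a-1) * (1-p) ^ (-a)) volume 0 b :=
    intInt_left (by linarith) (fun p hp => by
      rw [uIcc_of_le hb.le] at hp; intro h; linarith [hp.2])
  have hq1 : IntervalIntegrable (fun p : ℝ => p ^ (a-1) * (1-p) ^ (-a)) volume b 1 :=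
    intInt_right (by linarith) (fun p hp => by
      rw [uIcc_of_le hb1.le] at hp; exact (lt_of_lt_of_le hb hp.1).ne')
  have hq' : Real.sin (π*a)/π * ((∫ p in (0:ℝ)..b, p ^ (a-1) * (1-p) ^ (-a))
      + (∫ p in b..(1:ℝ), p ^ (a-1) * (1-p) ^ (-a))) = 1 := by
    rw [intervalIntegral.integral_add_adjacent_intervals hq0 hq1, beta_val ha ha1]
    field_simp
  have e1 : b ^ (a-1) * (1-b) ^ (1-a) + b ^ a * (1-b) ^ (-a) = b ^ (a-1) * (1-b) ^ (-a) := by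
    have eb : b ^ a = b ^ (a-1) * b := by rw [← Real.rpow_add_one hb.ne']; ring_nf
    have e1b : (1-b) ^ (1-a) = (1-b) ^ (-a) * (1-b) := by
      rw [← Real.rpow_add_one (by intro h; linarith : (1:ℝ) - b ≠ 0)]; ring_nf
    rw [eb, e1b]; ring
  simp only [gFn]
  linear_combination hfsum - hq' + (Real.sin (π*a)/π) * e1
end

section
/- Let 0 < a < 1. If B ~ Beta(a, 1-a) and E ~ Exp(1) are independent, then E·B ~ Gamma(a, 1). -/
open Real MeasureTheory Set
open scoped ENNReal

private theorem pw_alg (a y x : ℝ) (hy : 0 < y) (hxy : y < x) :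
    Real.exp (-x) * (y/x) ^ (a-1) * (1 - y/x) ^ (-a) * Real.sin (π*a) / π / x
      = y ^ (a-1) * Real.exp (-y) * Real.sin (π*a) / π * (Real.exp (-(x-y)) * (x-y) ^ (-a)) := by
  have hx0 : 0 < x := hy.trans hxy
  have hxy0 : 0 < x - y := by linarith
  have h1 : (1 : ℝ) - y/x = (x-y)/x := by field_simp
  rw [h1, Real.div_rpow hy.le hx0.le, Real.div_rpow hxy0.le hx0.le]
  rw [show -x = -y + -(x-y) by ring, Real.exp_add]
  rw [Real.rpow_neg hx0.le a]
  have hxa : x ^ (a-1) ≠ 0 := (Real.rpow_pos_of_pos hx0 _).ne'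
  have hxa2 : x ^ a ≠ 0 := (Real.rpow_pos_of_pos hx0 _).ne'
  have hkey : x ^ (a-1) * x = x ^ a := by
    have h := Real.rpow_add hx0 (a-1) 1
    rw [Real.rpow_one] at h
    rw [← h]; norm_num
  field_simp
  linear_combination (norm := ring_nf) (-Real.sin (π*a)) * hkey

private theorem inner_integral (a : ℝ) (ha : 0 < a) (ha1 : a < 1) (y : ℝ) (hy : 0 < y) :
    ∫⁻ x in Ioi y, ENNReal.ofReal
        (Real.exp (-x) * (y/x) ^ (a-1) * (1 - y/x) ^ (-a) * Real.sin (π*a) / π / x)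
      = ENNReal.ofReal (y ^ (a-1) * Real.exp (-y) / Real.Gamma a) := by
  have h1a : (0:ℝ) < 1 - a := by linarith
  have hsin : 0 < Real.sin (π * a) := Real.sin_pos_of_pos_of_lt_pi (by positivity)
    (by nlinarith [Real.pi_pos])
  have hG : 0 < Real.Gamma a := Real.Gamma_pos_of_pos ha
  have hπ := Real.pi_pos
  set c : ℝ := y ^ (a-1) * Real.exp (-y) * Real.sin (π*a) / π with hc
  have hc0 : 0 ≤ c := by positivity
  calc ∫⁻ x in Ioi y, ENNReal.ofReal
        (Real.exp (-x) * (y/x) ^ (a-1) * (1 - y/x) ^ (-a) * Real.sin (π*a) / π / x)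
      = ∫⁻ x in Ioi y, ENNReal.ofReal c
          * ENNReal.ofReal (Real.exp (-(x-y)) * (x-y) ^ (-a)) := by
        refine setLIntegral_congr_fun measurableSet_Ioi
          (fun x hx => ?_)
        rw [pw_alg a y x hy hx, ENNReal.ofReal_mul hc0]
    _ = ENNReal.ofReal c * ∫⁻ x in Ioi y, ENNReal.ofReal (Real.exp (-(x-y)) * (x-y) ^ (-a)) := by
        rw [lintegral_const_mul _ (by fun_prop)]
    _ = ENNReal.ofReal c * ENNReal.ofReal (Real.Gamma (1-a)) := by
        congr 1
        have htr : ∫⁻ x in Ioi y,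
            (fun t => ENNReal.ofReal (Real.exp (-t) * t ^ (-a))) (x - y)
            = ∫⁻ t in Ioi (0:ℝ), ENNReal.ofReal (Real.exp (-t) * t ^ (-a)) := by
          rw [← lintegral_indicator measurableSet_Ioi, ← lintegral_indicator measurableSet_Ioi]
          rw [← lintegral_sub_right_eq_self
            ((Ioi (0:ℝ)).indicator (fun t => ENNReal.ofReal (Real.exp (-t) * t ^ (-a)))) y]
          congr 1
          funext x
          by_cases h : y < x
          · simp [Set.indicator_apply, h, sub_pos.mpr h]
          · simp [Set.indicator_apply, h, fun hh => h (sub_pos.mp hh), not_lt.mp h]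
        rw [htr]
        rw [Real.Gamma_eq_integral h1a]
        rw [MeasureTheory.ofReal_integral_eq_lintegral_ofReal (Real.GammaIntegral_convergent h1a)
          ((ae_restrict_iff' measurableSet_Ioi).mpr (Filter.Eventually.of_forall fun x hx => by
            have hx0 : (0:ℝ) < x := hx; positivity))]
        norm_num
    _ = ENNReal.ofReal (y ^ (a-1) * Real.exp (-y) / Real.Gamma a) := by
        rw [← ENNReal.ofReal_mul hc0]
        congr 1
        have h2 := Real.Gamma_mul_Gamma_one_sub a
        rw [hc]
        field_simp at h2 ⊢
        have hs' : Real.sin (a*π) ≠ 0 := by rw [mul_comm]; exact hsin.ne'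
        have h2' : Real.Gamma a * Real.Gamma (1-a) * Real.sin (a*π) = π := by
          rw [h2]; field_simp
        linear_combination (norm := ring_nf) h2'

private theorem key_lintegral (a : ℝ) (ha : 0 < a) (ha1 : a < 1)
    (f : ℝ → ℝ≥0∞) (hf : Measurable f) :
    ∫⁻ p : ℝ × ℝ, f (p.1 * p.2)
      ∂((volume.withDensity (fun x =>
          Set.indicator (Ioi (0 : ℝ)) (fun x => ENNReal.ofReal (Real.exp (-x))) x)).prod
        (volume.withDensity (fun b =>
          Set.indicator (Ioo (0 : ℝ) 1)
            (fun b => ENNReal.ofReal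
              (b ^ (a - 1) * (1 - b) ^ (-a) * Real.sin (π * a) / π)) b)))
    = ∫⁻ y, Set.indicator (Ioi (0 : ℝ))
          (fun x => ENNReal.ofReal (x ^ (a - 1) * Real.exp (-x) / Real.Gamma a)) y * f y := by
  set E : ℝ → ℝ≥0∞ := fun x =>
    Set.indicator (Ioi (0 : ℝ)) (fun x => ENNReal.ofReal (Real.exp (-x))) x with hEdef
  set B : ℝ → ℝ≥0∞ := fun b =>
    Set.indicator (Ioo (0 : ℝ) 1)
      (fun b => ENNReal.ofReal (b ^ (a - 1) * (1 - b) ^ (-a) * Real.sin (π * a) / π)) b with hBdef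
  have hE : Measurable E := Measurable.indicator (by fun_prop) measurableSet_Ioi
  have hB : Measurable B := Measurable.indicator (by fun_prop) measurableSet_Ioo
  set D : Set (ℝ × ℝ) := {p | 0 < p.2 ∧ p.2 < p.1} with hDdef
  have hD : MeasurableSet D :=
    (measurableSet_lt measurable_const measurable_snd).inter
      (measurableSet_lt measurable_snd measurable_fst)
  set Φ : ℝ × ℝ → ℝ≥0∞ := fun p =>
    D.indicator (fun p => ENNReal.ofReal
      (Real.exp (-p.1) * (p.2/p.1) ^ (a-1) * (1 - p.2/p.1) ^ (-a)
        * Real.sin (π*a) / π / p.1)) p * f p.2 with hΦdef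
  have hΦ : Measurable Φ :=
    (Measurable.indicator (by fun_prop) hD).mul (hf.comp measurable_snd)
  -- step 1-3 : unfold prod and densities
  have step1 : ∫⁻ p : ℝ × ℝ, f (p.1 * p.2) ∂((volume.withDensity E).prod (volume.withDensity B))
      = ∫⁻ x, E x * ∫⁻ b, B b * f (x * b) := by
    rw [lintegral_prod (fun p : ℝ × ℝ => f (p.1 * p.2))
      (Measurable.aemeasurable (by exact hf.comp (measurable_fst.mul measurable_snd)))]
    have inner : ∀ x : ℝ, (∫⁻ b, f (x * b) ∂(volume.withDensity B))
        = ∫⁻ b, B b * f (x * b) := fun x => by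
      rw [lintegral_withDensity_eq_lintegral_mul volume hB (show Measurable fun b => f (x*b) from hf.comp (measurable_const_mul x))]
      rfl
    simp_rw [inner]
    rw [lintegral_withDensity_eq_lintegral_mul volume hE
      (show Measurable fun x => ∫⁻ b, B b * f (x * b) from
        Measurable.lintegral_prod_right (f := fun x b => B b * f (x * b))
          ((hB.comp measurable_snd).mul (hf.comp (measurable_fst.mul measurable_snd))))]
    rfl
  have step2 : ∀ x : ℝ, E x * (∫⁻ b, B b * f (x * b)) = ∫⁻ y, Φ (x, y) := by
    intro x
    by_cases hx : 0 < x
    · have hEx : E x = ENNReal.ofReal (Real.exp (-x)) := indicator_of_mem (mem_Ioi.mpr hx) _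
      have hsub : (∫⁻ b, B b * f (x * b))
          = ENNReal.ofReal x⁻¹ * ∫⁻ y, B (y/x) * f y := by
        have hg : Measurable fun y => B (y/x) * f y :=
          (hB.comp (measurable_id.div_const x)).mul hf
        have h1 : (∫⁻ b, B b * f (x * b)) = ∫⁻ b, (fun y => B (y/x) * f y) (x * b) := by
          refine lintegral_congr fun b => ?_
          simp [mul_div_cancel_left₀ _ hx.ne']
        rw [h1, ← lintegral_map hg (measurable_const_mul x),
          Real.map_volume_mul_left hx.ne', lintegral_smul_measure, abs_inv, abs_of_pos hx, smul_eq_mul]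
      rw [hEx, hsub, ← lintegral_const_mul (ENNReal.ofReal x⁻¹)
          (show Measurable fun y => B (y/x) * f y from
            (hB.comp (measurable_id.div_const x)).mul hf),
        ← lintegral_const_mul (ENNReal.ofReal (Real.exp (-x)))
          (show Measurable fun y => ENNReal.ofReal x⁻¹ * (B (y/x) * f y) from
            (measurable_const.mul ((hB.comp (measurable_id.div_const x)).mul hf)))]
      refine lintegral_congr fun y => ?_
      by_cases hy : y ∈ Ioo 0 x
      · have hmemD : (x, y) ∈ D := ⟨hy.1, hy.2⟩
        have hmem1 : y / x ∈ Ioo (0:ℝ) 1 := ⟨div_pos hy.1 hx, (div_lt_one hx).mpr hy.2⟩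
        rw [hΦdef]
        simp only
        rw [indicator_of_mem hmemD, hBdef]
        simp only
        rw [indicator_of_mem hmem1]
        rw [← mul_assoc, ← mul_assoc, ← ENNReal.ofReal_mul (Real.exp_pos _).le,
          ← ENNReal.ofReal_mul (by positivity)]
        congr 2
        ring
      · have hmemD : (x, y) ∉ D := fun h => hy ⟨h.1, h.2⟩
        have hmem1 : y / x ∉ Ioo (0:ℝ) 1 := by
          intro h
          have hy0 : 0 < y := by
            have h2 := mul_pos h.1 hx
            rwa [div_mul_cancel₀ _ hx.ne'] at h2
          exact hy ⟨hy0, (div_lt_one hx).mp h.2⟩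
        rw [hΦdef]
        simp only
        rw [indicator_of_notMem hmemD, hBdef]
        simp only
        rw [indicator_of_notMem hmem1]
        simp
    · have hEx : E x = 0 := indicator_of_notMem (by simpa using not_lt.mp (by simpa using hx)) _
      rw [hEx, zero_mul]
      symm
      have hz : ∀ y, Φ (x, y) = 0 := by
        intro y
        rw [hΦdef]
        simp only
        rw [indicator_of_notMem (fun h : (x,y) ∈ D => hx (h.1.trans h.2)), zero_mul]
      simp [hz]
  have step3 : ∫⁻ x, ∫⁻ y, Φ (x, y) = ∫⁻ y, ∫⁻ x, Φ (x, y) := by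
    exact lintegral_lintegral_swap hΦ.aemeasurable
  have step4 : ∀ y : ℝ, (∫⁻ x, Φ (x, y)) = Set.indicator (Ioi (0 : ℝ))
      (fun x => ENNReal.ofReal (x ^ (a - 1) * Real.exp (-x) / Real.Gamma a)) y * f y := by
    intro y
    by_cases hy : 0 < y
    · have hrw : ∀ x : ℝ, Φ (x, y) = (Ioi y).indicator
          (fun x => ENNReal.ofReal (Real.exp (-x) * (y/x) ^ (a-1) * (1 - y/x) ^ (-a)
            * Real.sin (π*a) / π / x)) x * f y := by
        intro x
        rw [hΦdef]
        simp only
        by_cases hxy : y < x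
        · rw [indicator_of_mem (show (x,y) ∈ D from ⟨hy, hxy⟩),
            indicator_of_mem (mem_Ioi.mpr hxy)]
        · rw [indicator_of_notMem (fun h : (x,y) ∈ D => hxy h.2),
            indicator_of_notMem (fun h => hxy (mem_Ioi.mp h))]
      simp_rw [hrw]
      rw [lintegral_mul_const _ (Measurable.indicator (by fun_prop) measurableSet_Ioi),
        lintegral_indicator measurableSet_Ioi, inner_integral a ha ha1 y hy,
        indicator_of_mem (mem_Ioi.mpr hy)]
    · have hz : ∀ x, Φ (x, y) = 0 := by
        intro x
        rw [hΦdef]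
        simp only
        rw [indicator_of_notMem (fun h : (x,y) ∈ D => hy h.1), zero_mul]
      rw [indicator_of_notMem (fun h => hy (mem_Ioi.mp h)), zero_mul]
      simp [hz]
  rw [step1, lintegral_congr step2, step3, lintegral_congr step4]

theorem exp_times_beta_is_gamma (a : ℝ) (ha : 0 < a) (ha1 : a < 1) :
    Measure.map (fun x : ℝ × ℝ => x.1 * x.2)
      ((volume.withDensity (fun x =>
          Set.indicator (Ioi (0 : ℝ)) (fun x => ENNReal.ofReal (Real.exp (-x))) x)).prod
        (volume.withDensity (fun b =>
          Set.indicator (Ioo (0 : ℝ) 1)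
            (fun b => ENNReal.ofReal
              (b ^ (a - 1) * (1 - b) ^ (-a) * Real.sin (π * a) / π)) b)))
    = volume.withDensity (fun x =>
        Set.indicator (Ioi (0 : ℝ))
          (fun x => ENNReal.ofReal (x ^ (a - 1) * Real.exp (-x) / Real.Gamma a)) x) := by
  refine Measure.ext fun s hs => ?_
  rw [Measure.map_apply (by fun_prop : Measurable (fun x : ℝ × ℝ => x.1 * x.2)) hs, withDensity_apply _ hs]
  have hind : Measurable (s.indicator (fun _ => (1:ℝ≥0∞))) := measurable_const.indicator hs
  have h1 : (((volume.withDensity (fun x =>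
          Set.indicator (Ioi (0 : ℝ)) (fun x => ENNReal.ofReal (Real.exp (-x))) x)).prod
        (volume.withDensity (fun b =>
          Set.indicator (Ioo (0 : ℝ) 1)
            (fun b => ENNReal.ofReal
              (b ^ (a - 1) * (1 - b) ^ (-a) * Real.sin (π * a) / π)) b))))
        ((fun x : ℝ × ℝ => x.1 * x.2) ⁻¹' s)
      = ∫⁻ p : ℝ × ℝ, s.indicator (fun _ => (1:ℝ≥0∞)) (p.1 * p.2)
          ∂(((volume.withDensity (fun x =>
          Set.indicator (Ioi (0 : ℝ)) (fun x => ENNReal.ofReal (Real.exp (-x))) x)).prod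
        (volume.withDensity (fun b =>
          Set.indicator (Ioo (0 : ℝ) 1)
            (fun b => ENNReal.ofReal
              (b ^ (a - 1) * (1 - b) ^ (-a) * Real.sin (π * a) / π)) b)))) := by
    rw [← lintegral_indicator_one ((by fun_prop : Measurable (fun x : ℝ × ℝ => x.1 * x.2)) hs)]
    refine lintegral_congr fun p => ?_
    by_cases h : p.1 * p.2 ∈ s <;> simp [Set.indicator_apply, h]
  rw [h1, key_lintegral a ha ha1 _ hind, ← lintegral_indicator hs]
  refine lintegral_congr fun y => ?_
  by_cases h : y ∈ s <;> simp [Set.indicator_apply, h]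
end

section
/- Let 0 < a < 1 and let U₁, U₂ be i.i.d. Unif(0,1), with P = U₁^{1/a}/(U₁^{1/a}+U₂^{1/(1-a)}). Then the CDF of P is F_P(p) = (1-a)(p/(1-p))^a for 0 < p ≤ 1/2, and F_P(p) = 1 − a((1-p)/p)^{1-a} for 1/2 ≤ p < 1. -/
open Real MeasureTheory Set

private lemma johnk_aux (a : ℝ) (ha : 0 < a) (ha1 : a < 1) (p : ℝ) (hp : 0 < p) (hp1 : p < 1) :
    ((volume.restrict (Ioo (0 : ℝ) 1)).prod (volume.restrict (Ioo (0 : ℝ) 1)))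
        {u : ℝ × ℝ | u.1 ^ (1 / a) / (u.1 ^ (1 / a) + u.2 ^ (1 / (1 - a))) ≤ p}
      = ∫⁻ x in Ioo (0:ℝ) 1,
          ENNReal.ofReal (1 - ((1 - p) / p) ^ (1 - a) * x ^ ((1 - a) / a)) := by
  have ha1' : 0 < 1 - a := by linarith
  have hcpos : 0 < (1 - p) / p := div_pos (by linarith) hp
  have h1 : Measurable fun u : ℝ × ℝ => u.1 ^ (1 / a) :=
    (Real.continuous_rpow_const (by positivity)).measurable.comp measurable_fst
  have h2 : Measurable fun u : ℝ × ℝ => u.2 ^ (1 / (1 - a)) :=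
    (Real.continuous_rpow_const (by positivity)).measurable.comp measurable_snd
  have hS : MeasurableSet {u : ℝ × ℝ | u.1 ^ (1 / a) / (u.1 ^ (1 / a) + u.2 ^ (1 / (1 - a))) ≤ p} :=
    measurableSet_le (h1.div (h1.add h2)) measurable_const
  rw [Measure.prod_apply hS]
  refine setLIntegral_congr_fun measurableSet_Ioo (fun x hx => ?_)
  have hxpos : 0 < x := hx.1
  have hX : 0 < x ^ (1 / a) := rpow_pos_of_pos hxpos _
  rw [Measure.restrict_apply (hS.preimage measurable_prodMk_left)]
  have hset : (Prod.mk x ⁻¹' {u : ℝ × ℝ |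
      u.1 ^ (1 / a) / (u.1 ^ (1 / a) + u.2 ^ (1 / (1 - a))) ≤ p}) ∩ Ioo 0 1
      = Ico (((1 - p) / p) ^ (1 - a) * x ^ ((1 - a) / a)) 1 := by
    ext y
    simp only [mem_inter_iff, mem_preimage, mem_setOf_eq, mem_Ioo, mem_Ico]
    constructor
    · rintro ⟨hcond, hy0, hy1⟩
      refine ⟨?_, hy1⟩
      have hY : 0 < y ^ (1 / (1 - a)) := rpow_pos_of_pos hy0 _
      rw [div_le_iff₀ (by positivity)] at hcond
      have key : (1 - p) / p * x ^ (1 / a) ≤ y ^ (1 / (1 - a)) := by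
        rw [div_mul_eq_mul_div, div_le_iff₀ hp]
        nlinarith
      have := rpow_le_rpow (by positivity) key ha1'.le
      rwa [mul_rpow hcpos.le hX.le, ← Real.rpow_mul hxpos.le, ← Real.rpow_mul hy0.le,
        one_div_mul_cancel (by linarith : (1:ℝ) - a ≠ 0), rpow_one,
        show 1 / a * (1 - a) = (1 - a) / a by ring] at this
    · rintro ⟨hyge, hy1⟩
      have hy0 : 0 < y := lt_of_lt_of_le (by positivity) hyge
      refine ⟨?_, hy0, hy1⟩
      have hY : 0 < y ^ (1 / (1 - a)) := rpow_pos_of_pos hy0 _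
      rw [div_le_iff₀ (by positivity)]
      have key : ((1 - p) / p * x ^ (1 / a)) ^ (1 - a) ≤ (y ^ (1 / (1 - a))) ^ (1 - a) := by
        rw [mul_rpow hcpos.le hX.le, ← Real.rpow_mul hxpos.le, ← Real.rpow_mul hy0.le,
          one_div_mul_cancel (by linarith), rpow_one,
          show 1 / a * (1 - a) = (1 - a) / a by ring]
        exact hyge
      have key2 : (1 - p) / p * x ^ (1 / a) ≤ y ^ (1 / (1 - a)) :=
        (rpow_le_rpow_iff (by positivity) hY.le ha1').1 key
      rw [div_mul_eq_mul_div, div_le_iff₀ hp] at key2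
      nlinarith
  rw [hset, Real.volume_Ico]

private lemma johnk_int2 (a : ℝ) (ha : 0 < a) (ha1 : a < 1) (t : ℝ) (ht0 : 0 ≤ t) (ht1 : t ≤ 1) :
    ∫⁻ x in Ioo (0:ℝ) 1, ENNReal.ofReal (1 - t * x ^ ((1 - a) / a))
      = ENNReal.ofReal (1 - a * t) := by
  have hb : (0:ℝ) < (1 - a) / a := div_pos (by linarith) ha
  have hint : IntegrableOn (fun x : ℝ => 1 - t * x ^ ((1 - a) / a)) (Ioo 0 1) := by
    refine (integrableOn_const (by simp) (by simp)).sub ?_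
    exact (((intervalIntegral.intervalIntegrable_rpow' (by linarith)).const_mul t).1.mono_set
      Ioo_subset_Ioc_self)
  have hnn : 0 ≤ᵐ[volume.restrict (Ioo (0:ℝ) 1)] fun x => 1 - t * x ^ ((1 - a) / a) := by
    refine (ae_restrict_iff' measurableSet_Ioo).2 (.of_forall fun x hx => ?_)
    have hx1 : x ^ ((1 - a) / a) ≤ 1 := rpow_le_one hx.1.le hx.2.le hb.le
    simp only [Pi.zero_apply]
    nlinarith
  rw [← ofReal_integral_eq_lintegral_ofReal hint hnn]
  congr 1
  rw [← integral_Ioc_eq_integral_Ioo, ← intervalIntegral.integral_of_le zero_le_one,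
    intervalIntegral.integral_sub intervalIntegrable_const
      ((intervalIntegral.intervalIntegrable_rpow' (by linarith)).const_mul t),
    intervalIntegral.integral_const, intervalIntegral.integral_const_mul,
    integral_rpow (Or.inl (by linarith))]
  have h1 : (1 - a) / a + 1 = 1 / a := by field_simp; ring
  rw [h1, Real.one_rpow, Real.zero_rpow (by positivity), smul_eq_mul]
  field_simp
  ring

private lemma johnk_int1 (a : ℝ) (ha : 0 < a) (ha1 : a < 1) (q : ℝ) (hq0 : 0 < q) (hq1 : q ≤ 1) :
    ∫⁻ x in Ioo (0:ℝ) 1, ENNReal.ofReal (1 - q ^ (a - 1) * x ^ ((1 - a) / a))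
      = ENNReal.ofReal ((1 - a) * q ^ a) := by
  have hb : (0:ℝ) < (1 - a) / a := div_pos (by linarith) ha
  set s : ℝ := q ^ a with hs
  have hs0 : 0 < s := rpow_pos_of_pos hq0 _
  have hs1 : s ≤ 1 := rpow_le_one hq0.le hq1 ha.le
  have ht0 : 0 < q ^ (a - 1) := rpow_pos_of_pos hq0 _
  have hsb : s ^ ((1 - a) / a) = q ^ (1 - a) := by
    rw [hs, ← Real.rpow_mul hq0.le, mul_div_cancel₀ _ ha.ne']
  have hts : q ^ (a - 1) * s ^ ((1 - a) / a) = 1 := by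
    rw [hsb, ← Real.rpow_add hq0]; norm_num
  rw [setLIntegral_congr (Ioo_ae_eq_Ioc),
    ← Ioc_union_Ioc_eq_Ioc hs0.le hs1,
    lintegral_union measurableSet_Ioc (Ioc_disjoint_Ioc_of_le le_rfl)]
  have hzero : ∫⁻ x in Ioc s 1, ENNReal.ofReal (1 - q ^ (a - 1) * x ^ ((1 - a) / a)) = 0 := by
    rw [setLIntegral_congr_fun measurableSet_Ioc (fun x hx => ?_), lintegral_zero]
    have hxb : s ^ ((1 - a) / a) ≤ x ^ ((1 - a) / a) := rpow_le_rpow hs0.le hx.1.le hb.le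
    have : (1:ℝ) ≤ q ^ (a - 1) * x ^ ((1 - a) / a) := by
      calc (1:ℝ) = q ^ (a - 1) * s ^ ((1 - a) / a) := hts.symm
      _ ≤ q ^ (a - 1) * x ^ ((1 - a) / a) := by
          exact mul_le_mul_of_nonneg_left hxb ht0.le
    exact ENNReal.ofReal_eq_zero.2 (by linarith)
  rw [hzero, add_zero]
  have hint : IntegrableOn (fun x : ℝ => 1 - q ^ (a - 1) * x ^ ((1 - a) / a)) (Ioc 0 s) := by
    refine (integrableOn_const (by simp) (by simp)).sub ?_
    exact ((intervalIntegral.intervalIntegrable_rpow' (r := (1 - a)/a) (by linarith)).const_mul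
      (q ^ (a - 1))).1
  have hnn : 0 ≤ᵐ[volume.restrict (Ioc (0:ℝ) s)]
      fun x => 1 - q ^ (a - 1) * x ^ ((1 - a) / a) := by
    refine (ae_restrict_iff' measurableSet_Ioc).2 (.of_forall fun x hx => ?_)
    simp only [Pi.zero_apply]
    have hxb : x ^ ((1 - a) / a) ≤ s ^ ((1 - a) / a) := rpow_le_rpow hx.1.le hx.2 hb.le
    have : q ^ (a - 1) * x ^ ((1 - a) / a) ≤ 1 := by
      calc q ^ (a - 1) * x ^ ((1 - a) / a) ≤ q ^ (a - 1) * s ^ ((1 - a) / a) :=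
            mul_le_mul_of_nonneg_left hxb ht0.le
        _ = 1 := hts
    linarith
  rw [← ofReal_integral_eq_lintegral_ofReal hint hnn]
  congr 1
  rw [← intervalIntegral.integral_of_le hs0.le,
    intervalIntegral.integral_sub intervalIntegrable_const
      ((intervalIntegral.intervalIntegrable_rpow' (by linarith)).const_mul _),
    intervalIntegral.integral_const, intervalIntegral.integral_const_mul,
    integral_rpow (Or.inl (by linarith))]
  have h1 : (1 - a) / a + 1 = 1 / a := by field_simp; ring
  have h2 : s ^ (1 / a) = q := by
    rw [hs, ← Real.rpow_mul hq0.le, mul_one_div_cancel ha.ne', rpow_one]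
  have h3 : q ^ (a - 1) * q = s := by
    nth_rewrite 2 [← Real.rpow_one q]
    rw [hs, ← Real.rpow_add hq0]
    norm_num
  rw [h1, h2, Real.zero_rpow (one_div_ne_zero ha.ne'), smul_eq_mul, sub_zero, sub_zero,
    one_div, show ∀ x : ℝ, x / a⁻¹ = x * a from fun x => by field_simp, ← mul_assoc, h3]
  ring

theorem johnk_ratio_cdf (a : ℝ) (ha : 0 < a) (ha1 : a < 1) (p : ℝ) :
    (0 < p → p ≤ 1 / 2 →
      ((volume.restrict (Ioo (0 : ℝ) 1)).prod (volume.restrict (Ioo (0 : ℝ) 1)))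
          {u : ℝ × ℝ | u.1 ^ (1 / a) / (u.1 ^ (1 / a) + u.2 ^ (1 / (1 - a))) ≤ p}
        = ENNReal.ofReal ((1 - a) * (p / (1 - p)) ^ a)) ∧
    (1 / 2 ≤ p → p < 1 →
      ((volume.restrict (Ioo (0 : ℝ) 1)).prod (volume.restrict (Ioo (0 : ℝ) 1)))
          {u : ℝ × ℝ | u.1 ^ (1 / a) / (u.1 ^ (1 / a) + u.2 ^ (1 / (1 - a))) ≤ p}
        = ENNReal.ofReal (1 - a * ((1 - p) / p) ^ (1 - a))) := by
  constructor
  · intro hp hp2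
    have hp1 : p < 1 := lt_of_le_of_lt hp2 (by norm_num)
    have hq0 : 0 < p / (1 - p) := div_pos hp (by linarith)
    have hq1 : p / (1 - p) ≤ 1 := (div_le_one (by linarith)).2 (by linarith)
    have hcq : ((1 - p) / p) ^ (1 - a) = (p / (1 - p)) ^ (a - 1) := by
      rw [show (1 - p) / p = (p / (1 - p))⁻¹ by rw [inv_div],
        Real.inv_rpow hq0.le, ← Real.rpow_neg hq0.le]
      congr 1; ring
    rw [johnk_aux a ha ha1 p hp hp1]
    simp_rw [hcq]
    exact johnk_int1 a ha ha1 _ hq0 hq1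
  · intro hp2 hp1
    have hp : 0 < p := lt_of_lt_of_le (by norm_num) hp2
    have ht0 : (0:ℝ) ≤ ((1 - p) / p) ^ (1 - a) :=
      Real.rpow_nonneg (div_nonneg (by linarith) hp.le) _
    have ht1 : ((1 - p) / p) ^ (1 - a) ≤ 1 :=
      Real.rpow_le_one (div_nonneg (by linarith) hp.le)
        ((div_le_one hp).2 (by linarith)) (by linarith)
    rw [johnk_aux a ha ha1 p hp hp1]
    exact johnk_int2 a ha ha1 _ ht0 ht1
end
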